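/- arXiv:2005.01378 — 2 statements merged into one kernel-verified Lean document; each statement's English description precedes it below -/
import Mathlib

section
/- Let 0 < ε < 1/2 and let u ∈ ℝ^d be a unit vector. Then: (i) for every w ∈ Δ_{N,2ε}, ‖∇_w F(w,u)‖₂ ≤ √N · max_{1≤i≤N} ‖X_i‖₂² + 2 · max_{1≤i≤N} ‖X_i‖₂ · ‖X‖₂; and (ii) for all w, w̃ ∈ ℝ^N, ‖∇_w F(w,u) − ∇_w F(w̃,u)‖₂ ≤ 2‖X‖₂² · ‖w − w̃‖₂. -/
open Matrix Finset RealInnerProductSpace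

/-- Euclidean (ℓ²) norm of a vector in `Fin n → ℝ`. -/
noncomputable def vnorm {n : ℕ} (v : Fin n → ℝ) : ℝ := Real.sqrt (∑ i, v i ^ 2)

/-- Spectral norm (ℓ²-operator norm) of a matrix. -/
noncomputable def specNorm {m n : ℕ} (A : Matrix (Fin m) (Fin n) ℝ) : ℝ :=
  ‖LinearMap.toContinuousLinearMap (Matrix.toEuclideanLin A)‖

/-- Largest eigenvalue of a symmetric matrix, as the supremum of the Rayleigh quotient
over the unit sphere. -/
noncomputable def lambdaMax {n : ℕ} (A : Matrix (Fin n) (Fin n) ℝ) : ℝ :=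
  sSup {r | ∃ v : Fin n → ℝ, vnorm v = 1 ∧ r = v ⬝ᵥ A.mulVec v}

/-- Weighted empirical mean `μ_w = X w`. -/
noncomputable def muW {d N : ℕ} (X : Matrix (Fin d) (Fin N) ℝ) (w : Fin N → ℝ) : Fin d → ℝ :=
  X.mulVec w

/-- Weighted empirical covariance `Σ_w = ∑ i, w_i (X_i - μ_w)(X_i - μ_w)ᵀ`. -/
noncomputable def covW {d N : ℕ} (X : Matrix (Fin d) (Fin N) ℝ) (w : Fin N → ℝ) :
    Matrix (Fin d) (Fin d) ℝ :=
  ∑ i : Fin N, w i • Matrix.vecMulVec (Xᵀ i - X.mulVec w) (Xᵀ i - X.mulVec w)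

/-- The constraint set `Δ_{N,ε}`. -/
def deltaSet (N : ℕ) (ε : ℝ) : Set (Fin N → ℝ) :=
  {w | (∑ i, w i) = 1 ∧ ∀ i, 0 ≤ w i ∧ w i ≤ 1 / ((1 - ε) * N)}

/-- Gradient in `w` of `F(w,u) = uᵀ Σ_w u`: the `i`-th coordinate is
`(X_iᵀu)² − 2(uᵀXw)(X_iᵀu)`. -/
noncomputable def gradFw {d N : ℕ} (X : Matrix (Fin d) (Fin N) ℝ) (w : Fin N → ℝ)
    (u : Fin d → ℝ) : Fin N → ℝ :=
  fun i => (Xᵀ i ⬝ᵥ u) ^ 2 - 2 * (u ⬝ᵥ X.mulVec w) * (Xᵀ i ⬝ᵥ u)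

/-- The matrix `Y = exp(ρ Σ_w) / tr(exp(ρ Σ_w))`. -/
noncomputable def ymat {d N : ℕ} (X : Matrix (Fin d) (Fin N) ℝ) (ρ : ℝ) (w : Fin N → ℝ) :
    Matrix (Fin d) (Fin d) ℝ :=
  ((NormedSpace.exp (ρ • covW X w)).trace)⁻¹ • NormedSpace.exp (ρ • covW X w)

/-- The softmax objective `f(w) = (1/ρ) ln tr exp(ρ Σ_w)`. -/
noncomputable def smaxObj {d N : ℕ} (X : Matrix (Fin d) (Fin N) ℝ) (ρ : ℝ) (w : Fin N → ℝ) : ℝ :=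
  (1 / ρ) * Real.log (NormedSpace.exp (ρ • covW X w)).trace

/-- Gradient of the softmax objective: `∇f(w)_i = X_iᵀ Y X_i − 2 X_iᵀ Y μ_w`. -/
noncomputable def gradSmax {d N : ℕ} (X : Matrix (Fin d) (Fin N) ℝ) (ρ : ℝ) (w : Fin N → ℝ) :
    Fin N → ℝ :=
  fun i => Xᵀ i ⬝ᵥ (ymat X ρ w).mulVec (Xᵀ i) - 2 * (Xᵀ i ⬝ᵥ (ymat X ρ w).mulVec (muW X w))

/-- Matrix logarithm of a symmetric matrix, via the spectral theorem (junk value `0` on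
non-Hermitian input). -/
noncomputable def matLog {n : ℕ} (Y : Matrix (Fin n) (Fin n) ℝ) : Matrix (Fin n) (Fin n) ℝ :=
  if h : Y.IsHermitian then h.cfc Real.log else 0


/-! The gradient is affine in `w`: `∇_w F(w,u) = ((X_iᵀu)²)ᵢ − 2 (uᵀXw) Xᵀu`. The difference of two
gradients is therefore `2 (uᵀX(w̃ − w)) Xᵀu`, which Cauchy–Schwarz and `‖Xᵀ‖₂ = ‖X‖₂` bound by
`2 ‖X‖₂² ‖w − w̃‖₂`. For `w` in the simplex, `uᵀXw` is a convex combination of the `X_iᵀu`, so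
`|uᵀXw| ≤ maxᵢ ‖X_i‖₂`, while each `(X_iᵀu)²` is at most `maxᵢ ‖X_i‖₂²`. -/

section Vnorm

variable {n : ℕ}

lemma vnorm_eq_norm_toLp (v : Fin n → ℝ) : vnorm v = ‖WithLp.toLp 2 v‖ := by
  simp [EuclideanSpace.norm_eq, vnorm]

lemma vnorm_nonneg (v : Fin n → ℝ) : 0 ≤ vnorm v := Real.sqrt_nonneg _

lemma vnorm_smul (c : ℝ) (v : Fin n → ℝ) : vnorm (c • v) = |c| * vnorm v := by
  simp only [vnorm_eq_norm_toLp, WithLp.toLp_smul, norm_smul, Real.norm_eq_abs]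

lemma vnorm_sub_le (v w : Fin n → ℝ) : vnorm (v - w) ≤ vnorm v + vnorm w := by
  simpa only [vnorm_eq_norm_toLp, WithLp.toLp_sub] using norm_sub_le _ _

lemma vnorm_sub_comm (v w : Fin n → ℝ) : vnorm (v - w) = vnorm (w - v) := by
  simp only [vnorm_eq_norm_toLp, WithLp.toLp_sub, norm_sub_rev]

lemma abs_dotProduct_le_vnorm_mul (v w : Fin n → ℝ) : |v ⬝ᵥ w| ≤ vnorm v * vnorm w := by
  have h := abs_real_inner_le_norm (WithLp.toLp 2 w) (WithLp.toLp 2 v)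
  rwa [EuclideanSpace.inner_toLp_toLp, star_trivial, ← vnorm_eq_norm_toLp,
    ← vnorm_eq_norm_toLp, mul_comm (vnorm w)] at h

lemma vnorm_le_sqrt_card_mul {C : ℝ} (hC : 0 ≤ C) {v : Fin n → ℝ} (hv : ∀ i, |v i| ≤ C) :
    vnorm v ≤ Real.sqrt n * C := by
  have hsum : ∑ i, v i ^ 2 ≤ n * C ^ 2 := by
    calc ∑ i, v i ^ 2 ≤ ∑ _i : Fin n, C ^ 2 :=
          Finset.sum_le_sum fun i _ => sq_le_sq' (abs_le.mp (hv i)).1 (abs_le.mp (hv i)).2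
      _ = n * C ^ 2 := by simp
  calc vnorm v ≤ Real.sqrt (n * C ^ 2) := Real.sqrt_le_sqrt hsum
    _ = Real.sqrt n * C := by rw [Real.sqrt_mul n.cast_nonneg, Real.sqrt_sq hC]

end Vnorm

section SpecNorm

variable {m n : ℕ}

lemma specNorm_nonneg (A : Matrix (Fin m) (Fin n) ℝ) : 0 ≤ specNorm A := norm_nonneg _

lemma vnorm_mulVec_le (A : Matrix (Fin m) (Fin n) ℝ) (v : Fin n → ℝ) :
    vnorm (A *ᵥ v) ≤ specNorm A * vnorm v := by
  rw [vnorm_eq_norm_toLp, vnorm_eq_norm_toLp]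
  exact (LinearMap.toContinuousLinearMap (Matrix.toEuclideanLin A)).le_opNorm _

lemma specNorm_transpose (A : Matrix (Fin m) (Fin n) ℝ) : specNorm Aᵀ = specNorm A := by
  rw [← Matrix.conjTranspose_eq_transpose_of_trivial, specNorm, specNorm,
    Matrix.toEuclideanLin_conjTranspose_eq_adjoint, LinearMap.adjoint_toContinuousLinearMap]
  exact ContinuousLinearMap.adjoint.norm_map _

lemma vnorm_transpose_mulVec_le {A : Matrix (Fin m) (Fin n) ℝ} {u : Fin m → ℝ}
    (hu : vnorm u = 1) : vnorm (Aᵀ *ᵥ u) ≤ specNorm A := by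
  simpa [specNorm_transpose, hu] using vnorm_mulVec_le Aᵀ u

end SpecNorm

lemma deltaSet_subset_stdSimplex (N : ℕ) (ε : ℝ) : deltaSet N ε ⊆ stdSimplex ℝ (Fin N) :=
  fun _ hw => ⟨fun i => (hw.2 i).1, hw.1⟩

section Gradient

variable {d N : ℕ} (X : Matrix (Fin d) (Fin N) ℝ) (u : Fin d → ℝ)

lemma gradFw_eq (w : Fin N → ℝ) :
    gradFw X w u = (fun i => (Xᵀ i ⬝ᵥ u) ^ 2) - (2 * (u ⬝ᵥ X *ᵥ w)) • (Xᵀ *ᵥ u) := by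
  ext i
  simp only [gradFw, Pi.sub_apply, Pi.smul_apply, smul_eq_mul, Matrix.mulVec]

lemma gradFw_sub_gradFw (w w' : Fin N → ℝ) :
    gradFw X w u - gradFw X w' u = (2 * (u ⬝ᵥ X *ᵥ (w' - w))) • (Xᵀ *ᵥ u) := by
  rw [gradFw_eq, gradFw_eq, Matrix.mulVec_sub, dotProduct_sub]
  module

lemma abs_dotProduct_mulVec_le_of_mem_stdSimplex {w : Fin N → ℝ} (hw : w ∈ stdSimplex ℝ (Fin N))
    {C : ℝ} (hC : ∀ i, |Xᵀ i ⬝ᵥ u| ≤ C) : |u ⬝ᵥ X *ᵥ w| ≤ C := by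
  have hcomb : u ⬝ᵥ X *ᵥ w = ∑ i, w i * (Xᵀ i ⬝ᵥ u) := by
    rw [dotProduct_mulVec, dotProduct_comm]
    simp only [dotProduct, vecMul, transpose_apply, mul_comm (u _)]
  calc |u ⬝ᵥ X *ᵥ w| ≤ ∑ i, w i * |Xᵀ i ⬝ᵥ u| := by
        rw [hcomb]
        refine (Finset.abs_sum_le_sum_abs _ _).trans_eq (Finset.sum_congr rfl fun i _ => ?_)
        rw [abs_mul, abs_of_nonneg (hw.1 i)]
    _ ≤ ∑ i, w i * C := Finset.sum_le_sum fun i _ => mul_le_mul_of_nonneg_left (hC i) (hw.1 i)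
    _ = C := by rw [← Finset.sum_mul, hw.2, one_mul]

variable {u}

lemma vnorm_gradFw_le (hu : vnorm u = 1) {w : Fin N → ℝ} (hw : w ∈ stdSimplex ℝ (Fin N)) :
    vnorm (gradFw X w u) ≤
      Real.sqrt N * (⨆ i : Fin N, vnorm (Xᵀ i) ^ 2) +
        2 * (⨆ i : Fin N, vnorm (Xᵀ i)) * specNorm X := by
  set M₁ := ⨆ i : Fin N, vnorm (Xᵀ i)
  set M₂ := ⨆ i : Fin N, vnorm (Xᵀ i) ^ 2
  have hcol : ∀ i, |Xᵀ i ⬝ᵥ u| ≤ vnorm (Xᵀ i) := fun i => by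
    simpa [hu] using abs_dotProduct_le_vnorm_mul (Xᵀ i) u
  have hM₁ : ∀ i, |Xᵀ i ⬝ᵥ u| ≤ M₁ := fun i =>
    (hcol i).trans (le_ciSup (f := fun j => vnorm (Xᵀ j)) (Finite.bddAbove_range _) i)
  have hM₂ : ∀ i, |(Xᵀ i ⬝ᵥ u) ^ 2| ≤ M₂ := fun i => by
    rw [abs_pow]
    exact (pow_le_pow_left₀ (abs_nonneg _) (hcol i) 2).trans
      (le_ciSup (f := fun j => vnorm (Xᵀ j) ^ 2) (Finite.bddAbove_range _) i)
  have hquad : vnorm (fun i => (Xᵀ i ⬝ᵥ u) ^ 2) ≤ Real.sqrt N * M₂ :=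
    vnorm_le_sqrt_card_mul (Real.iSup_nonneg fun _ => sq_nonneg _) hM₂
  have hlin : vnorm ((2 * (u ⬝ᵥ X *ᵥ w)) • (Xᵀ *ᵥ u)) ≤ 2 * M₁ * specNorm X := by
    have hM₁_nonneg : 0 ≤ M₁ := Real.iSup_nonneg fun _ => vnorm_nonneg _
    rw [vnorm_smul, abs_mul, abs_two]
    exact mul_le_mul
      (mul_le_mul_of_nonneg_left (abs_dotProduct_mulVec_le_of_mem_stdSimplex X u hw hM₁) two_pos.le)
      (vnorm_transpose_mulVec_le hu) (vnorm_nonneg _) (mul_nonneg two_pos.le hM₁_nonneg)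
  rw [gradFw_eq]
  exact (vnorm_sub_le _ _).trans (add_le_add hquad hlin)

lemma vnorm_gradFw_sub_le (hu : vnorm u = 1) (w w' : Fin N → ℝ) :
    vnorm (gradFw X w u - gradFw X w' u) ≤ 2 * specNorm X ^ 2 * vnorm (w - w') := by
  have hdot : |u ⬝ᵥ X *ᵥ (w' - w)| ≤ specNorm X * vnorm (w - w') := by
    calc |u ⬝ᵥ X *ᵥ (w' - w)| ≤ vnorm (X *ᵥ (w' - w)) := by
          simpa [hu] using abs_dotProduct_le_vnorm_mul u (X *ᵥ (w' - w))
      _ ≤ specNorm X * vnorm (w - w') := by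
          rw [vnorm_sub_comm w]; exact vnorm_mulVec_le X _
  calc vnorm (gradFw X w u - gradFw X w' u)
      = 2 * |u ⬝ᵥ X *ᵥ (w' - w)| * vnorm (Xᵀ *ᵥ u) := by
        rw [gradFw_sub_gradFw, vnorm_smul, abs_mul, abs_two]
    _ ≤ 2 * (specNorm X * vnorm (w - w')) * specNorm X := by
        exact mul_le_mul (mul_le_mul_of_nonneg_left hdot two_pos.le)
          (vnorm_transpose_mulVec_le hu) (vnorm_nonneg _)
          (mul_nonneg two_pos.le (mul_nonneg (specNorm_nonneg X) (vnorm_nonneg _)))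
    _ = 2 * specNorm X ^ 2 * vnorm (w - w') := by ring

end Gradient

theorem stmt_7_general {d N : ℕ} (X : Matrix (Fin d) (Fin N) ℝ) (ε : ℝ)
    (u : Fin d → ℝ) (hu : vnorm u = 1) :
    (∀ w ∈ deltaSet N (2 * ε),
      vnorm (gradFw X w u) ≤
        Real.sqrt N * (⨆ i : Fin N, vnorm (Xᵀ i) ^ 2) +
          2 * (⨆ i : Fin N, vnorm (Xᵀ i)) * specNorm X) ∧
    ∀ w w' : Fin N → ℝ,
      vnorm (gradFw X w u - gradFw X w' u) ≤ 2 * specNorm X ^ 2 * vnorm (w - w') :=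
  ⟨fun _ hw => vnorm_gradFw_le X hu (deltaSet_subset_stdSimplex N _ hw),
    vnorm_gradFw_sub_le X hu⟩

/-- Lipschitz and smoothness bounds for `∇_w F(w,u)`. -/
theorem stmt_7 {d N : ℕ} (X : Matrix (Fin d) (Fin N) ℝ) (ε : ℝ)
    (hε0 : 0 < ε) (hε1 : ε < 1 / 2)
    (u : Fin d → ℝ) (hu : vnorm u = 1) :
    (∀ w ∈ deltaSet N (2 * ε),
      vnorm (gradFw X w u) ≤
        Real.sqrt N * (⨆ i : Fin N, vnorm (Xᵀ i) ^ 2) +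
          2 * (⨆ i : Fin N, vnorm (Xᵀ i)) * specNorm X) ∧
    ∀ w w' : Fin N → ℝ,
      vnorm (gradFw X w u - gradFw X w' u) ≤ 2 * specNorm X ^ 2 * vnorm (w - w') :=
  stmt_7_general X ε u hu
end

section
/- Let 0 < ε < 1/4 with εN an integer, and let constants satisfy c₁ ≥ 1, c₂ ≥ 1, and c₃ ≥ 5c₁. Assume the concentration condition with constant c₁. Let w ∈ Δ_{N,2ε}, set r = ‖μ_w − μ*‖₂, and assume r ≥ c₂ ε √(ln(1/ε)). Let Y = exp(ρΣ_w)/tr(exp(ρΣ_w)) with ρ = ln(d)/ε. Then there exists j ∈ G with w_j < 1/((1−2ε)N) such that ∇f(w)_j − μ*ᵀY(μ* − 2μ_w) ≤ c₃ r²/ε². -/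
open Matrix Finset RealInnerProductSpace

/-!
Average the centred gradient coordinates
`g_j = (X_j - μ*)ᵀ Y (X_j - μ*) - 2 (X_j - μ*)ᵀ Y (μ_w - μ*)` over the good points with the
weights `q_j = 1/((1-2ε)N) - w_j ≥ 0`, which vanish exactly on the saturated coordinates and
have total mass `T ≥ ε/(1-2ε)`. Concentration, applied to `w` and to the uniform weights on `G`,
bounds the `q`-weighted second moment of the good points by `(1 + 2 c₁ ln(1/ε)) T`. As `Y` is
positive semidefinite of trace at most one, Young's inequality `-2 aᵀYh ≤ ε aᵀYa + hᵀYh/ε`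
bounds the `q`-average of the `g_j` by `(1+ε)(1 + 2 c₁ ln(1/ε)) + r²/ε ≤ 4 c₁ r²/ε²`, and some
`j` with `q_j > 0` is at most this average.
-/

namespace Matrix

variable {n : Type*} [Fintype n]

lemma dotProduct_sq_le (u v : n → ℝ) : (u ⬝ᵥ v) ^ 2 ≤ (u ⬝ᵥ u) * (v ⬝ᵥ v) := by
  simpa only [dotProduct, sq] using Finset.sum_mul_sq_le_sq_mul_sq Finset.univ u v

variable {Y : Matrix n n ℝ}

lemma PosSemidef.exists_dotProduct_mulVec_eq_sum (hY : Y.PosSemidef) :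
    ∃ (m : ℕ) (v : Fin m → n → ℝ), (∀ a c, a ⬝ᵥ Y *ᵥ c = ∑ k, (v k ⬝ᵥ a) * (v k ⬝ᵥ c)) ∧
      Y.trace = ∑ k, v k ⬝ᵥ v k := by
  obtain ⟨m, v, rfl⟩ := posSemidef_iff_eq_sum_vecMulVec.mp hY
  refine ⟨m, v, fun a c => ?_, ?_⟩
  · rw [sum_mulVec, dotProduct_sum]
    refine Finset.sum_congr rfl fun k _ => ?_
    simp [vecMulVec_mulVec, dotProduct_comm a, mul_comm]
  · simp [trace_sum, trace_vecMulVec]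

lemma PosSemidef.dotProduct_mulVec_le_trace_mul (hY : Y.PosSemidef) (u : n → ℝ) :
    u ⬝ᵥ Y *ᵥ u ≤ Y.trace * (u ⬝ᵥ u) := by
  obtain ⟨m, v, hYv, htr⟩ := hY.exists_dotProduct_mulVec_eq_sum
  rw [hYv, htr, Finset.sum_mul]
  exact Finset.sum_le_sum fun k _ => by simpa only [sq] using dotProduct_sq_le (v k) u

lemma PosSemidef.sum_mul_dotProduct_mulVec_le (hY : Y.PosSemidef) {ι : Type*} (s : Finset ι)
    (q : ι → ℝ) (x : ι → n → ℝ) {Q : ℝ}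
    (hQ : ∀ u, ∑ j ∈ s, q j * (x j ⬝ᵥ u) ^ 2 ≤ Q * (u ⬝ᵥ u)) :
    ∑ j ∈ s, q j * (x j ⬝ᵥ Y *ᵥ x j) ≤ Q * Y.trace := by
  obtain ⟨m, v, hYv, htr⟩ := hY.exists_dotProduct_mulVec_eq_sum
  calc ∑ j ∈ s, q j * (x j ⬝ᵥ Y *ᵥ x j)
      = ∑ k, ∑ j ∈ s, q j * (x j ⬝ᵥ v k) ^ 2 := by
        simp only [hYv, Finset.mul_sum, dotProduct_comm (v _), sq]
        exact Finset.sum_comm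
    _ ≤ ∑ k, Q * (v k ⬝ᵥ v k) := Finset.sum_le_sum fun k _ => hQ (v k)
    _ = Q * Y.trace := by rw [htr, Finset.mul_sum]

lemma PosSemidef.neg_two_mul_le (hY : Y.PosSemidef) {ε : ℝ} (hε : 0 < ε) (a c : n → ℝ) :
    -(2 * (a ⬝ᵥ Y *ᵥ c)) ≤ ε * (a ⬝ᵥ Y *ᵥ a) + (c ⬝ᵥ Y *ᵥ c) / ε := by
  obtain ⟨m, v, hYv, -⟩ := hY.exists_dotProduct_mulVec_eq_sum
  simp only [hYv, Finset.mul_sum, Finset.sum_div, ← Finset.sum_add_distrib,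
    ← Finset.sum_neg_distrib]
  gcongr with k
  rw [← sub_nonneg]
  have hsquare : ε * ((v k ⬝ᵥ a) * (v k ⬝ᵥ a)) + (v k ⬝ᵥ c) * (v k ⬝ᵥ c) / ε
      - -(2 * ((v k ⬝ᵥ a) * (v k ⬝ᵥ c))) = (ε * (v k ⬝ᵥ a) + v k ⬝ᵥ c) ^ 2 / ε := by
    field_simp; ring
  rw [hsquare]; positivity

lemma PosSemidef.sum_mul_sub_two_mul_le (hY : Y.PosSemidef) {ε : ℝ} (hε : 0 < ε) {ι : Type*}
    (s : Finset ι) {q : ι → ℝ} (hq : ∀ j ∈ s, 0 ≤ q j) (x : ι → n → ℝ) (h : n → ℝ) {Q : ℝ}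
    (hQ : ∀ u, ∑ j ∈ s, q j * (x j ⬝ᵥ u) ^ 2 ≤ Q * (u ⬝ᵥ u)) :
    ∑ j ∈ s, q j * (x j ⬝ᵥ Y *ᵥ x j - 2 * (x j ⬝ᵥ Y *ᵥ h)) ≤
      Y.trace * ((1 + ε) * Q + (∑ j ∈ s, q j) * (h ⬝ᵥ h) / ε) := by
  have hhY := hY.dotProduct_mulVec_le_trace_mul h
  have hsq : 0 ≤ ∑ j ∈ s, q j := Finset.sum_nonneg hq
  calc ∑ j ∈ s, q j * (x j ⬝ᵥ Y *ᵥ x j - 2 * (x j ⬝ᵥ Y *ᵥ h))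
      ≤ ∑ j ∈ s, q j * ((1 + ε) * (x j ⬝ᵥ Y *ᵥ x j) + (h ⬝ᵥ Y *ᵥ h) / ε) := by
        gcongr with j hj
        · exact hq j hj
        · linarith [hY.neg_two_mul_le hε (x j) h]
    _ = (1 + ε) * ∑ j ∈ s, q j * (x j ⬝ᵥ Y *ᵥ x j) + (∑ j ∈ s, q j) * (h ⬝ᵥ Y *ᵥ h) / ε := by
        simp only [mul_add, Finset.sum_add_distrib, Finset.mul_sum, Finset.sum_mul, Finset.sum_div]
        congr 1 <;> refine Finset.sum_congr rfl fun j _ => by ring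
    _ ≤ (1 + ε) * (Q * Y.trace) + (∑ j ∈ s, q j) * (Y.trace * (h ⬝ᵥ h)) / ε := by
        gcongr
        exact hY.sum_mul_dotProduct_mulVec_le s q x hQ
    _ = Y.trace * ((1 + ε) * Q + (∑ j ∈ s, q j) * (h ⬝ᵥ h) / ε) := by ring

lemma IsHermitian.dotProduct_mulVec_comm (hY : Y.IsHermitian) (u v : n → ℝ) :
    u ⬝ᵥ Y *ᵥ v = v ⬝ᵥ Y *ᵥ u := by
  rw [dotProduct_mulVec, ← mulVec_transpose, ← conjTranspose_eq_transpose_of_trivial, hY.eq,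
    dotProduct_comm]

lemma IsHermitian.posSemidef_exp [DecidableEq n] {A : Matrix n n ℝ} (hA : A.IsHermitian) :
    (NormedSpace.exp A).PosSemidef := by
  set B := NormedSpace.exp ((1 / 2 : ℝ) • A)
  have hB : B.IsHermitian := (hA.smul (IsSelfAdjoint.all _)).exp
  have hBB : NormedSpace.exp A = Bᴴ * B := by
    rw [hB.eq, ← exp_add_of_commute _ _ (Commute.refl _), ← add_smul]
    norm_num
  rw [hBB]
  exact posSemidef_conjTranspose_mul_self B

end Matrix

lemma vnorm_sq {n : ℕ} (v : Fin n → ℝ) : vnorm v ^ 2 = v ⬝ᵥ v := by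
  rw [vnorm, Real.sq_sqrt (by positivity)]
  simp [dotProduct, sq]

lemma abs_dotProduct_mulVec_le_specNorm {n : ℕ} (M : Matrix (Fin n) (Fin n) ℝ) (u : Fin n → ℝ) :
    |u ⬝ᵥ M *ᵥ u| ≤ specNorm M * (u ⬝ᵥ u) := by
  set T := LinearMap.toContinuousLinearMap (Matrix.toEuclideanLin M)
  set u' : EuclideanSpace ℝ (Fin n) := WithLp.toLp 2 u
  have hinner : u ⬝ᵥ M *ᵥ u = inner ℝ u' (T u') := by
    simp [T, u', EuclideanSpace.inner_toLp_toLp, dotProduct_comm]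
  have hnorm : ‖u'‖ ^ 2 = u ⬝ᵥ u := by
    rw [← real_inner_self_eq_norm_sq, EuclideanSpace.inner_toLp_toLp, star_trivial]
  calc |u ⬝ᵥ M *ᵥ u| ≤ ‖u'‖ * ‖T u'‖ := hinner ▸ abs_real_inner_le_norm _ _
    _ ≤ ‖u'‖ * (‖T‖ * ‖u'‖) := by gcongr; exact T.le_opNorm u'
    _ = specNorm M * (u ⬝ᵥ u) := by rw [specNorm, ← hnorm]; ring

lemma dotProduct_sum_smul_vecMulVec_mulVec {n ι : Type*} [Fintype n] (s : Finset ι)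
    (v : ι → ℝ) (x : ι → n → ℝ) (u : n → ℝ) :
    u ⬝ᵥ (∑ i ∈ s, v i • vecMulVec (x i) (x i)) *ᵥ u = ∑ i ∈ s, v i * (x i ⬝ᵥ u) ^ 2 := by
  rw [sum_mulVec, dotProduct_sum]
  refine Finset.sum_congr rfl fun i _ => ?_
  simp [smul_mulVec, vecMulVec_mulVec, dotProduct_comm u, sq]

lemma abs_sum_mul_sq_sub_le_specNorm {n : ℕ} {ι : Type*} (s : Finset ι) (v : ι → ℝ)
    (x : ι → Fin n → ℝ) (u : Fin n → ℝ) :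
    |∑ i ∈ s, v i * (x i ⬝ᵥ u) ^ 2 - u ⬝ᵥ u| ≤
      specNorm (∑ i ∈ s, v i • vecMulVec (x i) (x i) - 1) * (u ⬝ᵥ u) := by
  have h := abs_dotProduct_mulVec_le_specNorm (∑ i ∈ s, v i • vecMulVec (x i) (x i) - 1) u
  rwa [sub_mulVec, one_mulVec, dotProduct_sub, dotProduct_sum_smul_vecMulVec_mulVec] at h

lemma Finset.exists_pos_and_le_of_sum_mul_le {ι : Type*} {s : Finset ι} {q g : ι → ℝ} {K : ℝ}
    (hq : ∀ j ∈ s, 0 ≤ q j) (hpos : 0 < ∑ j ∈ s, q j)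
    (h : ∑ j ∈ s, q j * g j ≤ (∑ j ∈ s, q j) * K) : ∃ j ∈ s, 0 < q j ∧ g j ≤ K := by
  by_contra! hcon
  obtain ⟨j, hj, hqj⟩ :=
    Finset.exists_lt_of_sum_lt (s := s) (f := 0) (g := q) (by simpa using hpos)
  have hsum : 0 < ∑ j ∈ s, q j * (g j - K) := by
    refine Finset.sum_pos' (fun i hi => ?_) ⟨j, hj, mul_pos hqj (sub_pos.2 (hcon j hj hqj))⟩
    rcases (hq i hi).eq_or_lt with hqi | hqi
    · simp [← hqi]
    · exact (mul_pos hqi (sub_pos.2 (hcon i hi hqi))).le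
  simp only [mul_sub, Finset.sum_sub_distrib, ← Finset.sum_mul] at hsum
  linarith

lemma covW_isHermitian {d N : ℕ} (X : Matrix (Fin d) (Fin N) ℝ) (w : Fin N → ℝ) :
    (covW X w).IsHermitian := by
  ext i j
  simp [covW, Matrix.sum_apply, Matrix.vecMulVec_apply, mul_comm]

lemma ymat_posSemidef {d N : ℕ} (X : Matrix (Fin d) (Fin N) ℝ) (ρ : ℝ) (w : Fin N → ℝ) :
    (ymat X ρ w).PosSemidef :=
  have hE := ((covW_isHermitian X w).smul (IsSelfAdjoint.all ρ)).posSemidef_exp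
  hE.smul (inv_nonneg.2 hE.trace_nonneg)

-- Equality fails only for `d = 0`, where the normalising trace vanishes and `0⁻¹ = 0`.
lemma ymat_trace_le_one {d N : ℕ} (X : Matrix (Fin d) (Fin N) ℝ) (ρ : ℝ) (w : Fin N → ℝ) :
    (ymat X ρ w).trace ≤ 1 := by
  rw [ymat, Matrix.trace_smul, smul_eq_mul]
  exact inv_mul_le_one

lemma gradSmax_sub_eq {d N : ℕ} (X : Matrix (Fin d) (Fin N) ℝ) (ρ : ℝ) (w : Fin N → ℝ)
    (μs : Fin d → ℝ) (j : Fin N) :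
    gradSmax X ρ w j - μs ⬝ᵥ ymat X ρ w *ᵥ (μs - (2 : ℝ) • muW X w) =
      (Xᵀ j - μs) ⬝ᵥ ymat X ρ w *ᵥ (Xᵀ j - μs) -
        2 * ((Xᵀ j - μs) ⬝ᵥ ymat X ρ w *ᵥ (muW X w - μs)) := by
  have hY := (ymat_posSemidef X ρ w).isHermitian
  have h₁ := hY.dotProduct_mulVec_comm μs (Xᵀ j)
  have h₂ := hY.dotProduct_mulVec_comm μs (muW X w)
  simp only [gradSmax, mulVec_sub, dotProduct_sub, sub_dotProduct, mulVec_smul, dotProduct_smul,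
    smul_eq_mul]
  linarith

section Weights

variable {N : ℕ} {G : Finset (Fin N)} {ε : ℝ} {w : Fin N → ℝ}

lemma pos_of_mem_deltaSet (hw : w ∈ deltaSet N ε) : 0 < N := by
  rcases Nat.eq_zero_or_pos N with rfl | hN
  · simpa using hw.1
  · exact hN

lemma sum_le_one_of_mem_deltaSet (hw : w ∈ deltaSet N ε) (s : Finset (Fin N)) :
    ∑ i ∈ s, w i ≤ 1 :=
  hw.1 ▸ Finset.sum_le_sum_of_subset_of_nonneg s.subset_univ fun i _ _ => (hw.2 i).1

lemma uniform_mem_deltaSet (hG : (G.card : ℝ) = (1 - ε) * N) (hN : 0 < N) (hε0 : 0 ≤ ε)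
    (hε : ε < 1 / 2) :
    (fun i => if i ∈ G then ((1 - ε) * N)⁻¹ else 0) ∈ deltaSet N (2 * ε) := by
  have hpos : 0 < (1 - 2 * ε) * N := mul_pos (by linarith) (by exact_mod_cast hN)
  refine ⟨?_, fun i => ?_⟩
  · rw [Finset.sum_ite_mem, Finset.univ_inter, Finset.sum_const, nsmul_eq_mul, hG,
      mul_inv_cancel₀ (by nlinarith)]
  · dsimp only
    split_ifs
    · refine ⟨inv_nonneg.2 (mul_nonneg (by linarith) N.cast_nonneg), ?_⟩
      rw [one_div]
      exact inv_anti₀ hpos (by nlinarith)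
    · exact ⟨le_rfl, by positivity⟩

lemma div_le_sum_cap_sub (hG : (G.card : ℝ) = (1 - ε) * N) (hε : ε < 1 / 2)
    (hw : w ∈ deltaSet N (2 * ε)) :
    ε / (1 - 2 * ε) ≤ ∑ j ∈ G, (1 / ((1 - 2 * ε) * N) - w j) := by
  have hN : (N : ℝ) ≠ 0 := by exact_mod_cast (pos_of_mem_deltaSet hw).ne'
  have hε2 : 1 - 2 * ε ≠ 0 := by linarith
  have hcap : G.card * (1 / ((1 - 2 * ε) * N)) = 1 + ε / (1 - 2 * ε) := by
    rw [hG, one_add_div hε2]; field_simp; ring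
  rw [Finset.sum_sub_distrib, Finset.sum_const, nsmul_eq_mul, hcap]
  linarith [sum_le_one_of_mem_deltaSet hw G]

lemma sum_cap_sub_mul_sq_le {d : ℕ} {κ : ℝ}
    (hG : (G.card : ℝ) = (1 - ε) * N) (hε0 : 0 < ε) (hε : ε < 1 / 2) (hκ : 0 ≤ κ)
    (x : Fin N → Fin d → ℝ)
    (hconc : ∀ v ∈ deltaSet N (2 * ε),
      specNorm (∑ i ∈ G, v i • vecMulVec (x i) (x i) - 1) ≤ κ * ε)
    (hw : w ∈ deltaSet N (2 * ε)) (u : Fin d → ℝ) :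
    ∑ j ∈ G, (1 / ((1 - 2 * ε) * N) - w j) * (x j ⬝ᵥ u) ^ 2 ≤
      (1 + 2 * κ) * (∑ j ∈ G, (1 / ((1 - 2 * ε) * N) - w j)) * (u ⬝ᵥ u) := by
  have hN : (0 : ℝ) < N := by exact_mod_cast pos_of_mem_deltaSet hw
  have hε2 : 0 < 1 - 2 * ε := by linarith
  have huu : 0 ≤ u ⬝ᵥ u := Finset.sum_nonneg fun i _ => mul_self_nonneg (u i)
  have hquad : ∀ v ∈ deltaSet N (2 * ε), |∑ i ∈ G, v i * (x i ⬝ᵥ u) ^ 2 - u ⬝ᵥ u| ≤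
      κ * ε * (u ⬝ᵥ u) := fun v hv =>
    (abs_sum_mul_sq_sub_le_specNorm G v x u).trans (mul_le_mul_of_nonneg_right (hconc v hv) huu)
  have hlow : (1 - κ * ε) * (u ⬝ᵥ u) ≤ ∑ j ∈ G, w j * (x j ⬝ᵥ u) ^ 2 := by
    linarith [(abs_le.1 (hquad w hw)).1]
  have hup : ∑ j ∈ G, (x j ⬝ᵥ u) ^ 2 ≤ (1 - ε) * N * ((1 + κ * ε) * (u ⬝ᵥ u)) := by
    have h := (abs_le.1 (hquad _ (uniform_mem_deltaSet hG (by exact_mod_cast hN) hε0.le hε))).2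
    rw [Finset.sum_congr rfl fun i hi => by rw [if_pos hi], ← Finset.mul_sum] at h
    rw [← inv_mul_le_iff₀ (mul_pos (by linarith) hN)]
    linarith
  calc ∑ j ∈ G, (1 / ((1 - 2 * ε) * N) - w j) * (x j ⬝ᵥ u) ^ 2
      = 1 / ((1 - 2 * ε) * N) * ∑ j ∈ G, (x j ⬝ᵥ u) ^ 2 - ∑ j ∈ G, w j * (x j ⬝ᵥ u) ^ 2 := by
        rw [Finset.mul_sum, ← Finset.sum_sub_distrib]
        exact Finset.sum_congr rfl fun j _ => by ring
    _ ≤ 1 / ((1 - 2 * ε) * N) * ((1 - ε) * N * ((1 + κ * ε) * (u ⬝ᵥ u))) -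
          (1 - κ * ε) * (u ⬝ᵥ u) := by gcongr
    _ = (1 + (2 - 3 * ε) * κ) * (ε / (1 - 2 * ε)) * (u ⬝ᵥ u) := by field_simp; ring
    _ ≤ (1 + 2 * κ) * (∑ j ∈ G, (1 / ((1 - 2 * ε) * N) - w j)) * (u ⬝ᵥ u) := by
        gcongr
        · nlinarith
        · exact div_le_sum_cap_sub hG hε hw

end Weights

lemma one_add_mul_add_sq_div_le {ε c₁ c₂ r : ℝ} (hε0 : 0 < ε) (hε1 : ε < 1 / 4) (hc₁ : 1 ≤ c₁)
    (hc₂ : 1 ≤ c₂) (hr : c₂ * ε * Real.sqrt (Real.log (1 / ε)) ≤ r) :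
    (1 + ε) * (1 + 2 * (c₁ * Real.log (1 / ε))) + r ^ 2 / ε ≤ 4 * c₁ * (r ^ 2 / ε ^ 2) := by
  set L := Real.log (1 / ε)
  have hL : 1 < L := by
    have h4 : 4 ≤ 1 / ε := by rw [le_div_iff₀ hε0]; linarith
    rw [Real.lt_log_iff_exp_lt (by positivity)]
    linarith [Real.exp_one_lt_d9]
  have hLP : L ≤ r ^ 2 / ε ^ 2 := by
    have h := pow_le_pow_left₀ (by positivity) hr 2
    rw [mul_pow, mul_pow, Real.sq_sqrt (by linarith)] at h
    rw [le_div_iff₀ (by positivity)]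
    nlinarith [mul_le_mul_of_nonneg_right (one_le_pow₀ hc₂ : 1 ≤ c₂ ^ 2)
      (by positivity : 0 ≤ ε ^ 2 * L)]
  rw [show r ^ 2 / ε = ε * (r ^ 2 / ε ^ 2) by field_simp]
  set P := r ^ 2 / ε ^ 2
  have hP : 0 ≤ P := by linarith
  have hcL : c₁ * L ≤ c₁ * P := by gcongr
  have hPc : P ≤ c₁ * P := le_mul_of_one_le_left hP hc₁
  nlinarith [mul_le_mul_of_nonneg_left hcL hε0.le, mul_le_mul_of_nonneg_right hε1.le hP,
    mul_le_mul_of_nonneg_right hε1.le (hP.trans hPc)]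

theorem stmt_14_general {d N : ℕ} (X : Matrix (Fin d) (Fin N) ℝ) (μs : Fin d → ℝ)
    (G : Finset (Fin N)) (ε c₁ c₂ c₃ : ℝ)
    (hGcard : (G.card : ℝ) = (1 - ε) * N)
    (hε0 : 0 < ε) (hε1 : ε < 1 / 4)
    (hc₁ : 1 ≤ c₁) (hc₂ : 1 ≤ c₂) (hc₃ : 5 * c₁ ≤ c₃)
    (hconc : ∀ v ∈ deltaSet N (2 * ε),
      specNorm ((∑ i ∈ G, v i • Matrix.vecMulVec (Xᵀ i - μs) (Xᵀ i - μs)) - 1) ≤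
        c₁ * ε * Real.log (1 / ε))
    (w : Fin N → ℝ) (hw : w ∈ deltaSet N (2 * ε))
    (hr : c₂ * ε * Real.sqrt (Real.log (1 / ε)) ≤ vnorm (muW X w - μs)) :
    ∃ j ∈ G, w j < 1 / ((1 - 2 * ε) * N) ∧
      gradSmax X (Real.log d / ε) w j -
          μs ⬝ᵥ (ymat X (Real.log d / ε) w).mulVec (μs - (2 : ℝ) • muW X w) ≤
        c₃ * vnorm (muW X w - μs) ^ 2 / ε ^ 2 := by
  set r := vnorm (muW X w - μs)
  set κ := c₁ * Real.log (1 / ε)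
  set T := ∑ j ∈ G, (1 / ((1 - 2 * ε) * N) - w j)
  have hq : ∀ j ∈ G, 0 ≤ 1 / ((1 - 2 * ε) * N) - w j := fun j _ => sub_nonneg.2 (hw.2 j).2
  have hT : ε / (1 - 2 * ε) ≤ T := div_le_sum_cap_sub hGcard (by linarith) hw
  have hT0 : 0 < T := (div_pos hε0 (by linarith)).trans_le hT
  have hκ : 0 ≤ κ :=
    mul_nonneg (by linarith) (Real.log_nonneg (by rw [le_div_iff₀ hε0]; linarith))
  have hmoment := sum_cap_sub_mul_sq_le hGcard hε0 (by linarith) hκ (fun i => Xᵀ i - μs)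
    (fun v hv => (hconc v hv).trans_eq (by ring)) hw
  have hsum := (ymat_posSemidef X (Real.log d / ε) w).sum_mul_sub_two_mul_le hε0 G hq
    (fun i => Xᵀ i - μs) (muW X w - μs) hmoment
  rw [← vnorm_sq] at hsum
  have hbudget := one_add_mul_add_sq_div_le hε0 hε1 hc₁ hc₂ hr
  have hK : (1 + ε) * ((1 + 2 * κ) * T) + T * r ^ 2 / ε ≤ T * (c₃ * r ^ 2 / ε ^ 2) :=
    calc _ = T * ((1 + ε) * (1 + 2 * κ) + r ^ 2 / ε) := by ring
      _ ≤ T * (4 * c₁ * (r ^ 2 / ε ^ 2)) := mul_le_mul_of_nonneg_left hbudget hT0.le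
      _ ≤ T * (c₃ * r ^ 2 / ε ^ 2) := by rw [mul_div_assoc]; gcongr; linarith
  have hK0 : 0 ≤ (1 + ε) * ((1 + 2 * κ) * T) + T * r ^ 2 / ε := by
    have := hT0.le
    positivity
  obtain ⟨j, hjG, hqj, hj⟩ := Finset.exists_pos_and_le_of_sum_mul_le hq hT0 <|
    hsum.trans <| (mul_le_of_le_one_left hK0 (ymat_trace_le_one X _ w)).trans hK
  exact ⟨j, hjG, sub_pos.1 hqj, (gradSmax_sub_eq X _ w μs j).trans_le hj⟩

/-- good sample with a small softmax-gradient coordinate. -/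
theorem stmt_14 {d N : ℕ} (X : Matrix (Fin d) (Fin N) ℝ) (μs : Fin d → ℝ)
    (G B : Finset (Fin N)) (ε c₁ c₂ c₃ : ℝ)
    (hGB : Disjoint G B) (hUnion : G ∪ B = Finset.univ)
    (hGcard : (G.card : ℝ) = (1 - ε) * N) (hBcard : (B.card : ℝ) = ε * N)
    (hε0 : 0 < ε) (hε1 : ε < 1 / 4)
    (hc₁ : 1 ≤ c₁) (hc₂ : 1 ≤ c₂) (hc₃ : 5 * c₁ ≤ c₃)
    (hconc : ∀ v ∈ deltaSet N (2 * ε),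
      specNorm ((∑ i ∈ G, v i • Matrix.vecMulVec (Xᵀ i - μs) (Xᵀ i - μs)) - 1) ≤
        c₁ * ε * Real.log (1 / ε))
    (w : Fin N → ℝ) (hw : w ∈ deltaSet N (2 * ε))
    (hr : c₂ * ε * Real.sqrt (Real.log (1 / ε)) ≤ vnorm (muW X w - μs)) :
    ∃ j ∈ G, w j < 1 / ((1 - 2 * ε) * N) ∧
      gradSmax X (Real.log d / ε) w j -
          μs ⬝ᵥ (ymat X (Real.log d / ε) w).mulVec (μs - (2 : ℝ) • muW X w) ≤
        c₃ * vnorm (muW X w - μs) ^ 2 / ε ^ 2 :=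
  stmt_14_general X μs G ε c₁ c₂ c₃ hGcard hε0 hε1 hc₁ hc₂ hc₃ hconc w hw hr
end
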